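/- arXiv:1602.05722 — 7 statements merged into one kernel-verified Lean document; each statement's English description precedes it below -/
import Mathlib

section
/- Let f : ℂ → ℂ be entire and define P : ℂ² → ℂ by P(x₁,x₂) = e^{πix₂} f(x₁) + 1/4 + e^{πix₁} f(x₂). Then for all real (x₁,x₂), ∑_{n∈ℤ²} P(x+n)·χ_{[0,2]²}(x+n) = 1, where χ_{[0,2]²} is the indicator of [0,2]². -/
open Complex

theorem exp_pi_mul_I_mul_add_one (z : ℂ) :
    exp (Real.pi * I * (z + 1)) = -exp (Real.pi * I * z) := by
  rw [mul_add, mul_one, exp_add, exp_pi_mul_I, mul_neg_one]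

theorem pou_example_nonperiodic_general (f : ℂ → ℂ)
    (P : ℂ → ℂ → ℂ)
    (hP : ∀ x₁ x₂ : ℂ, P x₁ x₂ =
      Complex.exp (Real.pi * Complex.I * x₂) * f x₁ + 1 / 4 +
        Complex.exp (Real.pi * Complex.I * x₁) * f x₂) :
    ∀ x₁ x₂ : ℝ,
      P x₁ x₂ + P (x₁ + 1) x₂ + P x₁ (x₂ + 1) + P (x₁ + 1) (x₂ + 1) = 1 := by
  intro x₁ x₂
  simp only [hP, exp_pi_mul_I_mul_add_one]
  -- each f-term now occurs once with each sign, leaving four copies of 1 / 4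
  ring

theorem pou_example_nonperiodic (f : ℂ → ℂ) (hf : Differentiable ℂ f)
    (P : ℂ → ℂ → ℂ)
    (hP : ∀ x₁ x₂ : ℂ, P x₁ x₂ =
      Complex.exp (Real.pi * Complex.I * x₂) * f x₁ + 1 / 4 +
        Complex.exp (Real.pi * Complex.I * x₁) * f x₂) :
    ∀ x₁ x₂ : ℝ,
      P x₁ x₂ + P (x₁ + 1) x₂ + P x₁ (x₂ + 1) + P (x₁ + 1) (x₂ + 1) = 1 :=
  pou_example_nonperiodic_general f P hP
end

section
/- Let N ≥ 1 be an integer and define P : ℝᵈ → ℝ by P(x) = (4^{N-1}/(N·C(2N-2,N-1)))ᵈ ∏_{j=1}^d sin^{2N-2}(πxⱼ/N). Then for all x ∈ ℝᵈ, ∑_{n∈ℤᵈ∩[0,N-1]ᵈ} P(x+n) = 1. -/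
/-!
Writing `u = exp (2iθ)`, one has `sin θ ^ 2 = -(u - 1) ^ 2 / (4u)`, so `sin θ ^ (2m)` is a Laurent
polynomial in `u` with exponents `k - m`, `0 ≤ k ≤ 2m`, and constant term `C(2m, m) / 4 ^ m`.
Shifting `θ` by `πn/N` multiplies `u` by `ζ ^ n` with `ζ = exp (2πi/N)`, and summing over `n < N`
kills every exponent not divisible by `N`. When `m < N` only the constant term survives, giving
`∑_{n<N} sin (θ + πn/N) ^ (2m) = N C(2m, m) / 4 ^ m`. With `m = N - 1` this is the one-dimensional
case, and the `d`-dimensional sum factors into `d` of them.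
-/

open Finset
open scoped Real

theorem IsPrimitiveRoot.sum_mul_pow_zpow {K : Type*} [Field K] {ζ : K} {N : ℕ}
    (hζ : IsPrimitiveRoot ζ N) (u : K) (j : ℤ) :
    ∑ n ∈ range N, (u * ζ ^ n) ^ j = if (N : ℤ) ∣ j then N * u ^ j else 0 := by
  have hpow (n : ℕ) : (u * ζ ^ n) ^ j = u ^ j * (ζ ^ j) ^ n := by
    rw [mul_zpow, ← zpow_natCast, ← zpow_mul, mul_comm (n : ℤ), zpow_mul, zpow_natCast]
  simp_rw [hpow, ← mul_sum]
  split_ifs with hdvd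
  · simp [(hζ.zpow_eq_one_iff_dvd j).2 hdvd, mul_comm]
  · have hN : (ζ ^ j) ^ N = 1 := by
      rw [← zpow_natCast, ← zpow_mul, mul_comm, zpow_mul, hζ.zpow_eq_one, one_zpow]
    rw [geom_sum_eq (mt (hζ.zpow_eq_one_iff_dvd j).1 hdvd), hN, sub_self, zero_div, mul_zero]

namespace Complex

theorem sin_sq_eq_exp_two_mul_I (θ : ℂ) :
    sin θ ^ 2 = -(exp (2 * θ * I) - 1) ^ 2 / (4 * exp (2 * θ * I)) := by
  have he := exp_ne_zero (θ * I)
  rw [sin, neg_mul, exp_neg, show 2 * θ * I = θ * I + θ * I by ring, exp_add]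
  field_simp
  ring_nf
  rw [I_sq]
  ring

theorem sin_pow_two_mul (θ : ℂ) (m : ℕ) :
    sin θ ^ (2 * m) = (∑ k ∈ range (2 * m + 1),
      (-1) ^ (k + m) * (2 * m).choose k * exp (2 * θ * I) ^ ((k : ℤ) - m)) / 4 ^ m := by
  have hu : exp (2 * θ * I) ≠ 0 := exp_ne_zero _
  rw [pow_mul, sin_sq_eq_exp_two_mul_I, div_pow, neg_pow, ← pow_mul, sub_pow, mul_sum, sum_div,
    sum_div]
  refine sum_congr rfl fun k _ => ?_
  rw [zpow_sub₀ hu, zpow_natCast, zpow_natCast, pow_add _ k, pow_mul, neg_one_sq, one_pow,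
    mul_pow]
  field_simp
  ring

theorem sum_sin_add_pi_mul_div_pow {m N : ℕ} (hmN : m < N) (θ : ℂ) :
    ∑ n ∈ range N, sin (θ + π * n / N) ^ (2 * m) = N * (2 * m).choose m / 4 ^ m := by
  have hζ := isPrimitiveRoot_exp N (by omega)
  have hrot (n : ℕ) :
      exp (2 * (θ + π * n / N) * I) = exp (2 * θ * I) * exp (2 * π * I / N) ^ n := by
    rw [← exp_nat_mul, ← exp_add]
    ring_nf
  have hdvd (k : ℕ) (hk : k ∈ range (2 * m + 1)) : (N : ℤ) ∣ (k : ℤ) - m ↔ k = m := by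
    refine ⟨fun h => ?_, fun h => by simp [h]⟩
    -- `|k - m| ≤ m < N`
    have := Int.eq_zero_of_abs_lt_dvd h (by rw [mem_range] at hk; rw [abs_lt]; omega)
    omega
  simp_rw [sin_pow_two_mul, hrot]
  rw [← sum_div, sum_comm]
  simp_rw [← mul_sum, hζ.sum_mul_pow_zpow]
  rw [sum_eq_single_of_mem m (mem_range.2 (by omega)) fun k hk hkm => by simp [hdvd k hk, hkm]]
  simp [← two_mul, pow_mul, mul_comm (N : ℂ)]

end Complex

theorem Real.sum_sin_add_pi_mul_div_pow {m N : ℕ} (hmN : m < N) (θ : ℝ) :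
    ∑ n ∈ range N, sin (θ + π * n / N) ^ (2 * m) = N * (2 * m).choose m / 4 ^ m := by
  apply Complex.ofReal_injective
  push_cast
  exact Complex.sum_sin_add_pi_mul_div_pow hmN θ

theorem sin_pow_partition_of_unity_general (d N : ℕ) (hN : 1 ≤ N)
    (P : (Fin d → ℝ) → ℝ)
    (hP : ∀ x : Fin d → ℝ, P x =
      (4 ^ (N - 1) / (N * (2 * N - 2).choose (N - 1))) ^ d *
        ∏ j, Real.sin (Real.pi * x j / N) ^ (2 * N - 2)) :
    ∀ x : Fin d → ℝ,
      ∑ n ∈ Fintype.piFinset (fun _ : Fin d => Finset.range N),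
        P (fun j => x j + n j) = 1 := by
  intro x
  have hsum (j : Fin d) : ∑ n ∈ range N, Real.sin (Real.pi * (x j + n) / N) ^ (2 * N - 2)
      = N * (2 * N - 2).choose (N - 1) / 4 ^ (N - 1) := by
    simp_rw [mul_add, add_div, show 2 * N - 2 = 2 * (N - 1) by omega]
    exact Real.sum_sin_add_pi_mul_div_pow (by omega) _
  have hc : (N * (2 * N - 2).choose (N - 1) : ℝ) ≠ 0 := by
    have := Nat.choose_pos (show N - 1 ≤ 2 * N - 2 by omega)
    positivity
  simp only [hP]
  rw [← mul_sum, ← prod_univ_sum (fun _ : Fin d => range N)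
    (fun j n => Real.sin (Real.pi * (x j + n) / N) ^ (2 * N - 2)), prod_congr rfl fun j _ => hsum j,
    prod_const, card_univ, Fintype.card_fin, ← mul_pow, div_mul_div_cancel₀ hc,
    div_self (by positivity), one_pow]

theorem sin_pow_partition_of_unity (d N : ℕ) (hd : 1 ≤ d) (hN : 1 ≤ N)
    (P : (Fin d → ℝ) → ℝ)
    (hP : ∀ x : Fin d → ℝ, P x =
      (4 ^ (N - 1) / (N * (2 * N - 2).choose (N - 1))) ^ d *
        ∏ j, Real.sin (Real.pi * x j / N) ^ (2 * N - 2)) :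
    ∀ x : Fin d → ℝ,
      ∑ n ∈ Fintype.piFinset (fun _ : Fin d => Finset.range N),
        P (fun j => x j + n j) = 1 :=
  sin_pow_partition_of_unity_general d N hN P hP
end

section
/- Let N ≥ 2 be an integer and define P : ℝᵈ → ℝ by P(x) = (4^{N-1}/(N·C(2N-2,N-1)))ᵈ ∏_{j=1}^d sin^{2N-2}(πxⱼ/N). Then the function P·χ_{[0,N]ᵈ} (P times the indicator of the cube [0,N]ᵈ) is of class C^{2N-3} on ℝᵈ. -/
open Finset

/-!
The truncation factors over the coordinates into copies of the one-variable truncation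
`s ↦ 1_{[0,N]}(s) sin^{2N-2}(πs/N)`. On `(-N, 2N)` this equals `max(sin(πs/N), 0)^{2N-2}`,
because the sine is `≤ 0` on `(-N, 0) ∪ (N, 2N)`, and `t ↦ max(t, 0)^{k+1}` is `C^k`;
off `[0, N]` it vanishes on an open set.
-/

open Set Real Filter Topology

lemma hasDerivAt_max_zero_pow (n : ℕ) (s : ℝ) :
    HasDerivAt (fun t : ℝ => max t 0 ^ (n + 2)) ((n + 2) * max s 0 ^ (n + 1)) s := by
  rcases lt_trichotomy s 0 with hs | rfl | hs
  · have hzero : (fun t : ℝ => max t 0 ^ (n + 2)) =ᶠ[𝓝 s] fun _ => 0 := by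
      filter_upwards [Iio_mem_nhds hs] with t ht
      simp [max_eq_right (mem_Iio.1 ht).le]
    simpa [max_eq_right hs.le] using (hasDerivAt_const s (0 : ℝ)).congr_of_eventuallyEq hzero
  · have hneg : HasDerivWithinAt (fun t : ℝ => max t 0 ^ (n + 2)) 0 (Iic 0) 0 :=
      (hasDerivWithinAt_const 0 _ 0).congr (fun t ht => by simp [max_eq_right (mem_Iic.1 ht)])
        (by simp)
    have hpos : HasDerivWithinAt (fun t : ℝ => max t 0 ^ (n + 2)) 0 (Ici 0) 0 := by
      simpa using ((hasDerivAt_pow (n + 2) (0 : ℝ)).hasDerivWithinAt (s := Ici 0)).congr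
        (fun t ht => by simp [max_eq_left (mem_Ici.1 ht)]) (by simp)
    simpa [Iic_union_Ici] using hneg.union hpos
  · have hpow : (fun t : ℝ => max t 0 ^ (n + 2)) =ᶠ[𝓝 s] fun t => t ^ (n + 2) := by
      filter_upwards [Ioi_mem_nhds hs] with t ht
      rw [max_eq_left (mem_Ioi.1 ht).le]
    simpa [max_eq_left hs.le] using (hasDerivAt_pow (n + 2) s).congr_of_eventuallyEq hpow

lemma contDiff_max_zero_pow (k : ℕ) : ContDiff ℝ k fun t : ℝ => max t 0 ^ (k + 1) := by
  induction k with
  | zero => simpa [contDiff_zero] using continuous_id.max continuous_const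
  | succ k ih =>
    rw [Nat.cast_succ, contDiff_succ_iff_deriv]
    refine ⟨fun s => (hasDerivAt_max_zero_pow k s).differentiableAt, by simp, ?_⟩
    rw [funext fun s => (hasDerivAt_max_zero_pow k s).deriv]
    exact contDiff_const.mul ih

lemma sin_nonpos_of_mem_Ioo_of_notMem_Icc {x : ℝ} (hx : x ∈ Ioo (-π) (2 * π))
    (hx' : x ∉ Icc 0 π) : sin x ≤ 0 := by
  rcases not_and_or.1 hx' with hneg | hpi
  · exact sin_nonpos_of_nonpos_of_neg_pi_le (by linarith) hx.1.le
  · have := sin_nonneg_of_nonneg_of_le_pi (x := x - π) (by linarith) (by linarith [hx.2])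
    rwa [sin_sub_pi, neg_nonneg] at this

lemma eqOn_indicator_Icc_sin_pow {L : ℝ} (hL : 0 < L) {m : ℕ} (hm : m ≠ 0) :
    EqOn (indicator (Icc 0 L) fun s => sin (π * s / L) ^ m)
      (fun s => max (sin (π * s / L)) 0 ^ m) (Ioo (-L) (2 * L)) := by
  intro t ht
  dsimp only
  have hmem : π * t / L ∈ Icc 0 π ↔ t ∈ Icc 0 L := by
    simp only [Set.mem_Icc, div_le_iff₀ hL, le_div_iff₀ hL]
    constructor <;> rintro ⟨h0, h1⟩ <;> constructor <;> nlinarith [pi_pos]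
  by_cases hs : t ∈ Icc 0 L
  · rw [indicator_of_mem hs, max_eq_left (sin_nonneg_of_mem_Icc (hmem.2 hs))]
  · have hIoo : π * t / L ∈ Ioo (-π) (2 * π) := by
      obtain ⟨h0, h1⟩ := ht
      constructor
      · rw [lt_div_iff₀ hL]; nlinarith [pi_pos]
      · rw [div_lt_iff₀ hL]; nlinarith [pi_pos]
    rw [indicator_of_notMem hs,
      max_eq_right (sin_nonpos_of_mem_Ioo_of_notMem_Icc hIoo (mt hmem.1 hs)), zero_pow hm]

theorem contDiff_indicator_Icc_sin_pow {L : ℝ} (hL : 0 < L) (k : ℕ) :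
    ContDiff ℝ k (indicator (Icc 0 L) fun s => sin (π * s / L) ^ (k + 1)) := by
  have hsmooth : ContDiff ℝ k fun s => max (sin (π * s / L)) 0 ^ (k + 1) :=
    (contDiff_max_zero_pow k).comp (contDiff_sin.comp (by fun_prop))
  refine contDiff_iff_contDiffAt.2 fun s => ?_
  by_cases hs : s ∈ Icc 0 L
  · refine hsmooth.contDiffAt.congr_of_eventuallyEq ?_
    exact (eqOn_indicator_Icc_sin_pow hL k.succ_ne_zero).eventuallyEq_of_mem
      (Ioo_mem_nhds (by linarith [hs.1]) (by linarith [hs.2]))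
  · refine (contDiffAt_const (c := (0 : ℝ))).congr_of_eventuallyEq ?_
    filter_upwards [isClosed_Icc.isOpen_compl.mem_nhds hs] with t ht
    exact indicator_of_notMem ht _

lemma indicator_univ_pi_prod_apply {ι M : Type*} {α : ι → Type*} [Fintype ι]
    [CommMonoidWithZero M] (s : ∀ i, Set (α i)) (f : ∀ i, α i → M) (x : ∀ i, α i) :
    (univ.pi s).indicator (fun x => ∏ i, f i (x i)) x = ∏ i, (s i).indicator (f i) (x i) := by
  by_cases hx : x ∈ univ.pi s
  · rw [indicator_of_mem hx]
    exact Finset.prod_congr rfl fun i _ => (indicator_of_mem (hx i (mem_univ i)) _).symm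
  · obtain ⟨i, hi⟩ : ∃ i, x i ∉ s i := by simpa [Set.mem_univ_pi] using hx
    rw [indicator_of_notMem hx, Finset.prod_eq_zero (Finset.mem_univ i) (indicator_of_notMem hi _)]

theorem sin_pow_truncation_smooth_general (d N : ℕ) (hN : 2 ≤ N)
    (P : (Fin d → ℝ) → ℝ)
    (hP : ∀ x : Fin d → ℝ, P x =
      (4 ^ (N - 1) / (N * (2 * N - 2).choose (N - 1))) ^ d *
        ∏ j, Real.sin (Real.pi * x j / N) ^ (2 * N - 2)) :
    ContDiff ℝ ((2 * N - 3 : ℕ) : ℕ∞)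
      (Set.indicator (Set.Icc (0 : Fin d → ℝ) (fun _ => (N : ℝ))) P) := by
  set g := indicator (Icc 0 (N : ℝ)) fun s => sin (π * s / N) ^ (2 * N - 2)
  have hg : ContDiff ℝ (2 * N - 3 : ℕ) g := by
    have := contDiff_indicator_Icc_sin_pow (L := N) (by positivity) (2 * N - 3)
    rwa [show 2 * N - 3 + 1 = 2 * N - 2 by omega] at this
  have hfactor : indicator (Icc 0 fun _ => (N : ℝ)) P
      = fun x => (4 ^ (N - 1) / (N * (2 * N - 2).choose (N - 1))) ^ d * ∏ j, g (x j) := by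
    funext x
    rw [funext hP, ← pi_univ_Icc, indicator_const_mul]
    simp only [Pi.zero_apply]
    rw [indicator_univ_pi_prod_apply _ fun _ s => sin (π * s / N) ^ (2 * N - 2)]
  rw [hfactor]
  exact contDiff_const.mul (contDiff_prod fun j _ => hg.comp (contDiff_apply ℝ ℝ j))

theorem sin_pow_truncation_smooth (d N : ℕ) (hd : 1 ≤ d) (hN : 2 ≤ N)
    (P : (Fin d → ℝ) → ℝ)
    (hP : ∀ x : Fin d → ℝ, P x =
      (4 ^ (N - 1) / (N * (2 * N - 2).choose (N - 1))) ^ d *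
        ∏ j, Real.sin (Real.pi * x j / N) ^ (2 * N - 2)) :
    ContDiff ℝ ((2 * N - 3 : ℕ) : ℕ∞)
      (Set.indicator (Set.Icc (0 : Fin d → ℝ) (fun _ => (N : ℝ))) P) :=
  sin_pow_truncation_smooth_general d N hN P hP
end

section
/- Let L ≥ 1 and define Q : ℝ → ℝ by Q(x) = sin^{2L}(πx/2) ∑_{k=0}^{L-1} C(2L-1, k) sin^{2(L-1-k)}(πx/2) cos^{2k}(πx/2). Then Q(x) + Q(x+1) = 1 for all x ∈ ℝ. -/
/-! Shifting `x` by `1` turns `sin² (πx/2)` into `cos² (πx/2)` and vice versa, so with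
`a = sin²`, `b = cos²` the sum `Q x + Q (x + 1)` consists of the terms of the binomial expansion
of `(a + b) ^ (2L - 1)` with `a`-exponent `≥ L` and those with `b`-exponent `≥ L`, i.e. all of
them; and `a + b = 1`. -/

open Finset

theorem add_pow_two_mul_sub_one_eq_halves {R : Type*} [CommSemiring R] (L : ℕ) (hL : 1 ≤ L)
    (a b : R) :
    (a + b) ^ (2 * L - 1) =
      a ^ L * ∑ k ∈ range L, ((2 * L - 1).choose k : R) * a ^ (L - 1 - k) * b ^ k +
        b ^ L * ∑ k ∈ range L, ((2 * L - 1).choose k : R) * b ^ (L - 1 - k) * a ^ k := by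
  rw [add_pow, show 2 * L - 1 + 1 = L + L by omega, sum_range_add, mul_sum, mul_sum, add_comm]
  congr 1
  · conv_rhs => rw [← sum_range_reflect]
    refine sum_congr rfl fun k hk => ?_
    have hkL : k < L := mem_range.mp hk
    have hchoose : (2 * L - 1).choose (L + k) = (2 * L - 1).choose (L - 1 - k) := by
      rw [← Nat.choose_symm (by omega), show 2 * L - 1 - (L + k) = L - 1 - k by omega]
    rw [show L - 1 - (L - 1 - k) = k by omega, show 2 * L - 1 - (L + k) = L - 1 - k by omega,
      hchoose, pow_add]
    ring
  · refine sum_congr rfl fun k hk => ?_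
    rw [show 2 * L - 1 - k = L + (L - 1 - k) by have := mem_range.mp hk; omega, pow_add]
    ring

theorem one_dim_pou_high_regularity (L : ℕ) (hL : 1 ≤ L) (Q : ℝ → ℝ)
    (hQ : ∀ x : ℝ, Q x = Real.sin (Real.pi * x / 2) ^ (2 * L) *
      ∑ k ∈ Finset.range L, ((2 * L - 1).choose k : ℝ) *
        Real.sin (Real.pi * x / 2) ^ (2 * (L - 1 - k)) *
          Real.cos (Real.pi * x / 2) ^ (2 * k)) :
    ∀ x : ℝ, Q x + Q (x + 1) = 1 := by
  intro x
  have hshift : Real.pi * (x + 1) / 2 = Real.pi * x / 2 + Real.pi / 2 := by ring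
  rw [hQ x, hQ (x + 1), hshift, Real.sin_add_pi_div_two, Real.cos_add_pi_div_two]
  simp only [pow_mul, neg_sq]
  rw [← add_pow_two_mul_sub_one_eq_halves L hL, Real.sin_sq_add_cos_sq, one_pow]
end

section
/- Let L ≥ 1 and Q(x) = sin^{2L}(πx/2) ∑_{k=0}^{L-1} C(2L-1,k) sin^{2(L-1-k)}(πx/2) cos^{2k}(πx/2). Define P : ℝᵈ → ℝ by P(x) = ∏_{j=1}^d Q(xⱼ). Then ∑_{n∈{0,1}ᵈ} P(x+n) = 1 for all x ∈ ℝᵈ. -/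
/-!
With `u = sin² (πx/2)` and `v = cos² (πx/2)`, shifting `x` by `1` swaps `u` and `v`, and
`Q x + Q (x + 1)` is the binomial expansion of `(u + v) ^ (2L - 1) = 1`, split into the terms
with `u`-exponent at least `L` and those with `v`-exponent at least `L`. The identity for `P`
then follows by expanding `∏ j, (Q (x j) + Q (x j + 1))` over `{0, 1}ᵈ`.
-/

open Finset

theorem add_pow_odd_eq_halves {R : Type*} [CommSemiring R] (m : ℕ) (u v : R) :
    u ^ (m + 1) * ∑ k ∈ range (m + 1), ((2 * m + 1).choose k : R) * u ^ (m - k) * v ^ k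
      + v ^ (m + 1) * ∑ k ∈ range (m + 1), ((2 * m + 1).choose k : R) * v ^ (m - k) * u ^ k
      = (u + v) ^ (2 * m + 1) := by
  rw [add_comm (u ^ (m + 1) * _), add_pow, show 2 * m + 1 + 1 = (m + 1) + (m + 1) by ring,
    sum_range_add _ (m + 1) (m + 1), mul_sum, mul_sum]
  congr 1
  · refine sum_congr rfl fun k hk => ?_
    have hk : k ≤ m := Nat.lt_succ_iff.mp (mem_range.mp hk)
    rw [show 2 * m + 1 - k = (m + 1) + (m - k) by omega, pow_add]
    ring
  · rw [← sum_range_reflect]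
    refine sum_congr rfl fun k hk => ?_
    have hk : k ≤ m := Nat.lt_succ_iff.mp (mem_range.mp hk)
    rw [show m + 1 - 1 - k = m - k by omega, show m - (m - k) = k by omega,
      ← Nat.choose_symm (by omega : m + 1 + k ≤ 2 * m + 1),
      show 2 * m + 1 - (m + 1 + k) = m - k by omega, pow_add]
    ring

noncomputable def pouProfile (L : ℕ) (x : ℝ) : ℝ :=
  Real.sin (Real.pi * x / 2) ^ (2 * L) *
    ∑ k ∈ range L, ((2 * L - 1).choose k : ℝ) *
      Real.sin (Real.pi * x / 2) ^ (2 * (L - 1 - k)) * Real.cos (Real.pi * x / 2) ^ (2 * k)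

theorem pouProfile_add_pouProfile_add_one {L : ℕ} (hL : 1 ≤ L) (x : ℝ) :
    pouProfile L x + pouProfile L (x + 1) = 1 := by
  obtain ⟨m, rfl⟩ : ∃ m, L = m + 1 := ⟨L - 1, by omega⟩
  have hshift : Real.pi * (x + 1) / 2 = Real.pi * x / 2 + Real.pi / 2 := by ring
  simp only [pouProfile, hshift, Real.sin_add_pi_div_two, Real.cos_add_pi_div_two, pow_mul,
    neg_sq, show 2 * (m + 1) - 1 = 2 * m + 1 by omega, show ∀ k, m + 1 - 1 - k = m - k by omega]
  rw [add_pow_odd_eq_halves, Real.sin_sq_add_cos_sq, one_pow]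

theorem sum_piFinset_range_two_prod_eq_one {ι R : Type*} [Fintype ι] [DecidableEq ι]
    [CommSemiring R] (f : ι → ℕ → R) (hf : ∀ i, f i 0 + f i 1 = 1) :
    ∑ n ∈ Fintype.piFinset (fun _ : ι => range 2), ∏ i, f i (n i) = 1 := by
  rw [← prod_univ_sum]
  exact prod_eq_one fun i _ => by rw [sum_range_succ, sum_range_one, hf]

theorem product_pou_high_regularity_general (d L : ℕ) (hL : 1 ≤ L)
    (Q : ℝ → ℝ)
    (hQ : ∀ x : ℝ, Q x = Real.sin (Real.pi * x / 2) ^ (2 * L) *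
      ∑ k ∈ Finset.range L, ((2 * L - 1).choose k : ℝ) *
        Real.sin (Real.pi * x / 2) ^ (2 * (L - 1 - k)) *
          Real.cos (Real.pi * x / 2) ^ (2 * k))
    (P : (Fin d → ℝ) → ℝ) (hP : ∀ x : Fin d → ℝ, P x = ∏ j, Q (x j)) :
    ∀ x : Fin d → ℝ,
      ∑ n ∈ Fintype.piFinset (fun _ : Fin d => Finset.range 2),
        P (fun j => x j + n j) = 1 := by
  obtain rfl : Q = pouProfile L := funext hQ
  intro x
  simp only [hP]
  exact sum_piFinset_range_two_prod_eq_one (fun j n => pouProfile L (x j + n))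
    fun j => by simpa using pouProfile_add_pouProfile_add_one hL (x j)

theorem product_pou_high_regularity (d L : ℕ) (hd : 1 ≤ d) (hL : 1 ≤ L)
    (Q : ℝ → ℝ)
    (hQ : ∀ x : ℝ, Q x = Real.sin (Real.pi * x / 2) ^ (2 * L) *
      ∑ k ∈ Finset.range L, ((2 * L - 1).choose k : ℝ) *
        Real.sin (Real.pi * x / 2) ^ (2 * (L - 1 - k)) *
          Real.cos (Real.pi * x / 2) ^ (2 * k))
    (P : (Fin d → ℝ) → ℝ) (hP : ∀ x : Fin d → ℝ, P x = ∏ j, Q (x j)) :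
    ∀ x : Fin d → ℝ,
      ∑ n ∈ Fintype.piFinset (fun _ : Fin d => Finset.range 2),
        P (fun j => x j + n j) = 1 :=
  product_pou_high_regularity_general d L hL Q hQ P hP
end

section
/- For every ε > 0, the 2×2 matrix B_ε = ((1+ε)/4)·[[1,1],[1,-1]] has operator norm ‖B_ε‖ = (1+ε)/(2√2), yet there exists a nonzero n ∈ ℤ² (namely n = (1,0)) with (B_εᵀ)^{-1} n ∈ (-2,2)². -/
/-! The matrix `H₂ = !![1, 1; 1, -1]` satisfies `H₂ᵀ = H₂` and `H₂ * H₂ = 2 • 1`, so `B = c • H₂`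
with `c = (1 + ε) / 4` scales every Euclidean norm by exactly `√2 * c = (1 + ε) / (2√2)`, while
`(Bᵀ)⁻¹ = (2c)⁻¹ • H₂` sends `(1, 0)` to `(2 / (1 + ε), 2 / (1 + ε)) ∈ (0, 2)²`. -/

open Finset Matrix

local notation "H₂" => !![(1 : ℝ), 1; 1, -1]

lemma sum_sq_smul_mulVec {R m n : Type*} [CommSemiring R] [Fintype m] [Fintype n] (c : R)
    (A : Matrix m n R) (x : n → R) : ∑ j, ((c • A) *ᵥ x) j ^ 2 = c ^ 2 * ∑ j, (A *ᵥ x) j ^ 2 := by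
  simp only [smul_mulVec, Pi.smul_apply, smul_eq_mul, mul_pow, mul_sum]

lemma sum_sq_H₂_mulVec (x : Fin 2 → ℝ) :
    ∑ j, (H₂ *ᵥ x) j ^ 2 = 2 * ∑ j, x j ^ 2 := by
  simp only [mulVec, dotProduct, of_apply, cons_val', cons_val_fin_one, Fin.sum_univ_two,
    cons_val_zero, cons_val_one, one_mul, neg_mul]
  ring

lemma transpose_H₂ : H₂ᵀ = H₂ := by
  ext i j; fin_cases i <;> fin_cases j <;> rfl

lemma H₂_mul_self : H₂ * H₂ = (2 : ℝ) • 1 := by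
  rw [mul_fin_two]
  ext i j; fin_cases i <;> fin_cases j <;> norm_num

lemma sqrt_sum_sq_smul_H₂_mulVec {c : ℝ} (hc : 0 ≤ c) (x : Fin 2 → ℝ) :
    √(∑ j, ((c • H₂) *ᵥ x) j ^ 2) = (√2 * c) * √(∑ j, x j ^ 2) := by
  rw [sum_sq_smul_mulVec, sum_sq_H₂_mulVec, ← mul_assoc, Real.sqrt_mul (by positivity),
    Real.sqrt_mul (sq_nonneg c), Real.sqrt_sq hc, mul_comm c]

lemma inv_smul_H₂ {c : ℝ} (hc : c ≠ 0) :
    (c • H₂)⁻¹ = (2 * c)⁻¹ • H₂ := by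
  apply inv_eq_right_inv
  rw [smul_mul_smul, H₂_mul_self, smul_smul, show c * (2 * c)⁻¹ * 2 = 1 by field_simp, one_smul]

theorem norm_condition_sharp (ε : ℝ) (hε : 0 < ε) :
    ∀ B : Matrix (Fin 2) (Fin 2) ℝ,
      B = ((1 + ε) / 4) • !![1, 1; 1, -1] →
      ((∀ x : Fin 2 → ℝ,
          Real.sqrt (∑ j, (B.mulVec x j) ^ 2) ≤
            ((1 + ε) / (2 * Real.sqrt 2)) * Real.sqrt (∑ j, (x j) ^ 2)) ∧
        (∃ x : Fin 2 → ℝ, (∑ j, (x j) ^ 2) = 1 ∧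
          Real.sqrt (∑ j, (B.mulVec x j) ^ 2) = (1 + ε) / (2 * Real.sqrt 2)) ∧
        (∃ n : Fin 2 → ℤ, n ≠ 0 ∧
          ∀ j, (B.transpose)⁻¹.mulVec (fun i => (n i : ℝ)) j ∈
            Set.Ioo (-2 : ℝ) 2)) := by
  rintro B rfl
  have hc : 0 < (1 + ε) / 4 := by positivity
  have hscale : √2 * ((1 + ε) / 4) = (1 + ε) / (2 * √2) := by
    field_simp
    rw [Real.sq_sqrt zero_le_two]
    ring
  have hnorm x := (sqrt_sum_sq_smul_H₂_mulVec hc.le x).trans (by rw [hscale])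
  have hinv : (2 * ((1 + ε) / 4))⁻¹ = 2 / (1 + ε) := by field_simp; ring
  have hmem : 2 / (1 + ε) ∈ Set.Ioo (-2) 2 := by
    constructor
    · linarith [show 0 < 2 / (1 + ε) by positivity]
    · rw [div_lt_iff₀ (by positivity)]; linarith
  refine ⟨fun x => (hnorm x).le, ⟨![1, 0], by simp, by rw [hnorm]; simp⟩, ⟨![1, 0], by simp, ?_⟩⟩
  rw [transpose_smul, transpose_H₂, inv_smul_H₂ hc.ne', hinv]
  have hn : (fun i => ((![1, 0] : Fin 2 → ℤ) i : ℝ)) = ![1, 0] := by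
    ext i; fin_cases i <;> simp
  rw [hn, smul_mulVec]
  intro j
  fin_cases j <;> simpa [mulVec, dotProduct] using hmem
end

section
/- For a > 0 let B_a = (1/4)·[[2,0],[-2a,2]]. Then (B_aᵀ)^{-1} = [[2,2a],[0,2]], and for every nonzero n ∈ ℤ², (B_aᵀ)^{-1} n ∉ (-2,2)²; moreover ‖B_a‖ ≥ a/2, so sup_a ‖B_a‖ = ∞. -/
/-! The matrix `(B_aᵀ)⁻¹ = !![2, 2a; 0, 2]` is upper triangular with diagonal entries `2`, so for
an integer vector `n` the last coordinate of its image is `2 n₁`; lying in `(-2, 2)` forces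
`n₁ = 0`, and then the first coordinate is `2 n₀`, forcing `n₀ = 0`. The norm bound comes from
the unit vector `e₀`, whose image under `B_a` has second coordinate `-a/2`. -/

open Finset Matrix

theorem transpose_smul_lowerTriangular_mul_upperTriangular (a : ℝ) :
    ((1 / 4 : ℝ) • !![2, 0; -2 * a, 2])ᵀ * !![2, 2 * a; 0, 2] = 1 := by
  ext i j
  fin_cases i <;> fin_cases j <;> simp [mul_apply, Fin.sum_univ_two, one_apply] <;> ring

theorem Int.eq_zero_of_two_mul_mem_Ioo {m : ℤ} (h : (2 * m : ℝ) ∈ Set.Ioo (-2) 2) : m = 0 := by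
  have h₁ : (-1 : ℝ) < m := by linarith [h.1]
  have h₂ : (m : ℝ) < 1 := by linarith [h.2]
  exact Int.abs_lt_one_iff.mp (abs_lt.mpr ⟨by exact_mod_cast h₁, by exact_mod_cast h₂⟩)

theorem exists_mulVec_int_not_mem_Ioo (b : ℝ) {n : Fin 2 → ℤ} (hn : n ≠ 0) :
    ∃ j, (!![2, b; 0, 2] *ᵥ fun i => (n i : ℝ)) j ∉ Set.Ioo (-2 : ℝ) 2 := by
  by_contra! h
  have hv₀ : (!![2, b; 0, 2] *ᵥ fun i => (n i : ℝ)) 0 = 2 * n 0 + b * n 1 := by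
    simp [mulVec, dotProduct, Fin.sum_univ_two]
  have hv₁ : (!![2, b; 0, 2] *ᵥ fun i => (n i : ℝ)) 1 = 2 * n 1 := by
    simp [mulVec, dotProduct, Fin.sum_univ_two]
  have hn₁ : n 1 = 0 := Int.eq_zero_of_two_mul_mem_Ioo (hv₁ ▸ h 1)
  have hn₀ : n 0 = 0 := by
    refine Int.eq_zero_of_two_mul_mem_Ioo ?_
    simpa [hv₀, hn₁] using h 0
  exact hn (funext fun i => by fin_cases i <;> assumption)

theorem abs_apply_le_sqrt_sum_sq {ι : Type*} [Fintype ι] (v : ι → ℝ) (j : ι) :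
    |v j| ≤ √(∑ i, v i ^ 2) :=
  Real.abs_le_sqrt (single_le_sum (fun i _ => sq_nonneg (v i)) (mem_univ j))

theorem lattice_condition_large_norm_general (a : ℝ)
    (B : Matrix (Fin 2) (Fin 2) ℝ)
    (hB : B = (1 / 4 : ℝ) • !![2, 0; -2 * a, 2]) :
    (B.transpose)⁻¹ = !![2, 2 * a; 0, 2] ∧
    (∀ n : Fin 2 → ℤ, n ≠ 0 →
      ¬ (∀ j, (B.transpose)⁻¹.mulVec (fun i => (n i : ℝ)) j ∈
          Set.Ioo (-2 : ℝ) 2)) ∧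
    (∃ x : Fin 2 → ℝ, (∑ j, (x j) ^ 2) = 1 ∧
      a / 2 ≤ Real.sqrt (∑ j, (B.mulVec x j) ^ 2)) := by
  subst hB
  have hinv := inv_eq_right_inv (transpose_smul_lowerTriangular_mul_upperTriangular a)
  refine ⟨hinv, fun n hn h => ?_, ⟨![1, 0], by simp, ?_⟩⟩
  · obtain ⟨j, hj⟩ := exists_mulVec_int_not_mem_Ioo (2 * a) hn
    exact hj (hinv ▸ h j)
  · have hBe₀ : (((1 / 4 : ℝ) • !![2, 0; -2 * a, 2]) *ᵥ ![1, 0]) 1 = -(a / 2) := by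
      simp [mulVec, dotProduct, Fin.sum_univ_two]; ring
    calc a / 2 ≤ |-(a / 2)| := (le_abs_self _).trans (abs_neg _).ge
      _ ≤ _ := hBe₀ ▸ abs_apply_le_sqrt_sum_sq _ 1

theorem lattice_condition_large_norm (a : ℝ) (ha : 0 < a)
    (B : Matrix (Fin 2) (Fin 2) ℝ)
    (hB : B = (1 / 4 : ℝ) • !![2, 0; -2 * a, 2]) :
    (B.transpose)⁻¹ = !![2, 2 * a; 0, 2] ∧
    (∀ n : Fin 2 → ℤ, n ≠ 0 →
      ¬ (∀ j, (B.transpose)⁻¹.mulVec (fun i => (n i : ℝ)) j ∈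
          Set.Ioo (-2 : ℝ) 2)) ∧
    (∃ x : Fin 2 → ℝ, (∑ j, (x j) ^ 2) = 1 ∧
      a / 2 ≤ Real.sqrt (∑ j, (B.mulVec x j) ^ 2)) :=
  lattice_condition_large_norm_general a B hB
end
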